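/- Let H = L + D where L is the Laplacian of a directed graph G on nodes {1,...,N} and D = diag(d₁,...,d_N) with d_i ∈ {0,1}. Let L̄ be the Laplacian of the extended graph Ḡ on nodes {0,1,...,N} obtained by adding the leader node 0 with an edge (0,i) exactly when d_i = 1. If Ḡ is connected in the sense that node 0 is reachable to every other node by a directed path, then H is invertible (rank H = N). -/

import Mathlib

open Matrix Finset

/-!
Weakly chained diagonal dominance, after Taussky. If `H *ᵥ v = 0`, then at a row `i` where
`‖v i‖` is maximal, weak diagonal dominance forces `‖v j‖ = ‖v i‖` for every `j` with
`H i j ≠ 0`, and strict dominance forces `v i = 0`. So the maximum of `‖v‖` propagates along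
the nonzero entries of `H` until it reaches a strictly dominant row, where it vanishes.

For `H = L + D`, every row is weakly dominant, and it is strictly dominant exactly at the
followers `k` with `d k = 1`. Reading a path `0 → ⋯ → i` of the extended graph backwards gives
such a chain from `i` to a follower of the leader.
-/

section ChainedDiagDominant

variable {K n : Type*} [NormedField K] [Fintype n] [DecidableEq n] {A : Matrix n n K}
  {v : n → K}

theorem norm_diag_mul_le_of_mulVec_eq_zero (hv : A *ᵥ v = 0) (i : n) :
    ‖A i i‖ * ‖v i‖ ≤ ∑ j ∈ univ.erase i, ‖A i j‖ * ‖v j‖ := by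
  have hrow : A i i * v i = -∑ j ∈ univ.erase i, A i j * v j := by
    have := congrFun hv i
    rw [mulVec, dotProduct, ← add_sum_erase _ _ (mem_univ i)] at this
    exact eq_neg_of_add_eq_zero_left this
  calc ‖A i i‖ * ‖v i‖ = ‖∑ j ∈ univ.erase i, A i j * v j‖ := by
        rw [← norm_mul, hrow, norm_neg]
    _ ≤ ∑ j ∈ univ.erase i, ‖A i j * v j‖ := norm_sum_le _ _
    _ = ∑ j ∈ univ.erase i, ‖A i j‖ * ‖v j‖ := by simp_rw [norm_mul]

theorem sum_norm_mul_le_of_forall_norm_le {i : n} (hmax : ∀ j, ‖v j‖ ≤ ‖v i‖) :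
    ∑ j ∈ univ.erase i, ‖A i j‖ * ‖v j‖ ≤ (∑ j ∈ univ.erase i, ‖A i j‖) * ‖v i‖ := by
  rw [sum_mul]
  exact sum_le_sum fun j _ => mul_le_mul_of_nonneg_left (hmax j) (norm_nonneg _)

theorem eq_zero_of_mulVec_eq_zero_of_sum_row_lt_diag (hv : A *ᵥ v = 0) {i : n}
    (hmax : ∀ j, ‖v j‖ ≤ ‖v i‖) (hi : ∑ j ∈ univ.erase i, ‖A i j‖ < ‖A i i‖) : v i = 0 := by
  by_contra hvi
  have := (norm_diag_mul_le_of_mulVec_eq_zero hv i).trans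
    (sum_norm_mul_le_of_forall_norm_le hmax)
  exact hi.not_ge (le_of_mul_le_mul_right this (norm_pos_iff.mpr hvi))

theorem norm_eq_of_mulVec_eq_zero_of_sum_row_le_diag (hv : A *ᵥ v = 0) {i : n}
    (hmax : ∀ j, ‖v j‖ ≤ ‖v i‖) (hi : ∑ j ∈ univ.erase i, ‖A i j‖ ≤ ‖A i i‖) {j : n}
    (hij : A i j ≠ 0) : ‖v j‖ = ‖v i‖ := by
  obtain rfl | hji := eq_or_ne j i
  · rfl
  have hle : ∀ k ∈ univ.erase i, ‖A i k‖ * ‖v k‖ ≤ ‖A i k‖ * ‖v i‖ :=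
    fun k _ => mul_le_mul_of_nonneg_left (hmax k) (norm_nonneg _)
  have heq : ∑ k ∈ univ.erase i, ‖A i k‖ * ‖v k‖ = ∑ k ∈ univ.erase i, ‖A i k‖ * ‖v i‖ := by
    refine le_antisymm (sum_le_sum hle) ?_
    calc ∑ k ∈ univ.erase i, ‖A i k‖ * ‖v i‖ ≤ ‖A i i‖ * ‖v i‖ := by
          rw [← sum_mul]; exact mul_le_mul_of_nonneg_right hi (norm_nonneg _)
      _ ≤ _ := norm_diag_mul_le_of_mulVec_eq_zero hv i
  have := (sum_eq_sum_iff_of_le hle).mp heq j (mem_erase.mpr ⟨hji, mem_univ j⟩)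
  exact mul_left_cancel₀ (norm_ne_zero_iff.mpr hij) this

theorem norm_eq_of_mulVec_eq_zero_of_reflTransGen (hv : A *ᵥ v = 0)
    (hdom : ∀ k, ∑ j ∈ univ.erase k, ‖A k j‖ ≤ ‖A k k‖) {i k : n}
    (hmax : ∀ j, ‖v j‖ ≤ ‖v i‖) (hik : Relation.ReflTransGen (fun i j => A i j ≠ 0) i k) :
    ‖v k‖ = ‖v i‖ := by
  induction hik with
  | refl => rfl
  | tail _ hjk ih =>
    rw [← ih] at hmax ⊢
    exact norm_eq_of_mulVec_eq_zero_of_sum_row_le_diag hv hmax (hdom _) hjk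

theorem det_ne_zero_of_sum_row_le_diag_of_reflTransGen
    (hdom : ∀ k, ∑ j ∈ univ.erase k, ‖A k j‖ ≤ ‖A k k‖)
    (hchain : ∀ i, ∃ k, Relation.ReflTransGen (fun i j => A i j ≠ 0) i k ∧
      ∑ j ∈ univ.erase k, ‖A k j‖ < ‖A k k‖) :
    A.det ≠ 0 := by
  rw [Ne, ← exists_mulVec_eq_zero_iff]
  rintro ⟨v, hv0, hv⟩
  obtain ⟨i₀, hi₀⟩ := Function.ne_iff.mp hv0
  have : Nonempty n := ⟨i₀⟩
  obtain ⟨i, hmax⟩ := Finite.exists_max (‖v ·‖)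
  obtain ⟨k, hik, hk⟩ := hchain i
  have hnorm := norm_eq_of_mulVec_eq_zero_of_reflTransGen hv hdom hmax hik
  have hvk : v k = 0 := eq_zero_of_mulVec_eq_zero_of_sum_row_lt_diag hv (hnorm ▸ hmax) hk
  rw [hvk, norm_zero] at hnorm
  exact hi₀ (norm_le_zero_iff.mp (hnorm ▸ hmax i₀))

end ChainedDiagDominant

theorem Relation.ReflTransGen.exists_reflTransGen_some_of_none {α : Type*}
    {r : Option α → Option α → Prop} {i : α} (h : ReflTransGen r none (some i)) :
    ∃ k, ReflTransGen (fun i j => r (some j) (some i)) i k ∧ r none (some k) := by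
  suffices ∀ b, ReflTransGen r none b →
      ∀ i ∈ b, ∃ k, ReflTransGen (fun i j => r (some j) (some i)) i k ∧ r none (some k) from
    this _ h i rfl
  intro b hb
  induction hb with
  | refl => intro i hi; cases hi
  | @tail b c _ hbc ih =>
    rintro i rfl
    match b, hbc with
    | none, hroot => exact ⟨i, .refl, hroot⟩
    | some j, hji =>
      obtain ⟨k, hjk, hk⟩ := ih j rfl
      exact ⟨k, .head hji hjk, hk⟩

section LeaderFollower

variable {n : Type*} [Fintype n] [DecidableEq n] {a : n → n → ℝ} {d : n → ℝ}

def inDegreeLaplacian (a : n → n → ℝ) : Matrix n n ℝ :=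
  diagonal (fun i => ∑ j ∈ univ.erase i, a i j) - of a

theorem inDegreeLaplacian_add_diagonal_apply_of_ne {i j : n} (hij : i ≠ j) :
    (inDegreeLaplacian a + diagonal d) i j = -a i j := by
  simp [inDegreeLaplacian, diagonal_apply_ne _ hij]

theorem norm_inDegreeLaplacian_add_diagonal_apply_self {i : n} (ha : ∀ j, 0 ≤ a i j)
    (hai : a i i = 0) (hd : 0 ≤ d i) :
    ‖(inDegreeLaplacian a + diagonal d) i i‖ = ∑ j ∈ univ.erase i, a i j + d i := by
  simp only [inDegreeLaplacian, Matrix.add_apply, Matrix.sub_apply, diagonal_apply_eq, of_apply,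
    hai, sub_zero]
  exact Real.norm_of_nonneg (add_nonneg (sum_nonneg fun j _ => ha j) hd)

theorem sum_norm_inDegreeLaplacian_add_diagonal_apply {i : n} (ha : ∀ j, 0 ≤ a i j) :
    ∑ j ∈ univ.erase i, ‖(inDegreeLaplacian a + diagonal d) i j‖ = ∑ j ∈ univ.erase i, a i j := by
  refine sum_congr rfl fun j hj => ?_
  rw [inDegreeLaplacian_add_diagonal_apply_of_ne (ne_of_mem_erase hj).symm, norm_neg,
    Real.norm_of_nonneg (ha j)]

end LeaderFollower

theorem structure_matrix_invertible_of_connected {N : ℕ}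
    (a : Fin N → Fin N → ℝ) (ha : ∀ i j, a i j = 0 ∨ a i j = 1) (ha0 : ∀ i, a i i = 0)
    (d : Fin N → ℝ) (hd : ∀ i, d i = 0 ∨ d i = 1)
    (hconn : ∀ i : Fin N,
      Relation.ReflTransGen
        (fun u v : Option (Fin N) =>
          match u, v with
          | none, some i => d i = 1
          | some j, some i => a i j = 1
          | _, none => False)
        none (some i)) :
    IsUnit (Matrix.diagonal (fun i => ∑ j ∈ Finset.univ.erase i, a i j) - Matrix.of a
          + Matrix.diagonal d) := by
  have ha' : ∀ i j, 0 ≤ a i j := fun i j => by rcases ha i j with h | h <;> simp [h]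
  have hd' : ∀ i, 0 ≤ d i := fun i => by rcases hd i with h | h <;> simp [h]
  change IsUnit (inDegreeLaplacian a + diagonal d)
  rw [isUnit_iff_isUnit_det, isUnit_iff_ne_zero]
  refine det_ne_zero_of_sum_row_le_diag_of_reflTransGen (fun k => ?_) fun i => ?_
  · rw [sum_norm_inDegreeLaplacian_add_diagonal_apply (ha' k),
      norm_inDegreeLaplacian_add_diagonal_apply_self (ha' k) (ha0 k) (hd' k)]
    linarith [hd' k]
  · obtain ⟨k, hik, hk⟩ := (hconn i).exists_reflTransGen_some_of_none
    refine ⟨k, Relation.ReflTransGen.mono (fun i j hij => ?_) i k hik, ?_⟩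
    · replace hij : a i j = 1 := hij
      have hne : i ≠ j := fun h => by simp [h, ha0] at hij
      rw [inDegreeLaplacian_add_diagonal_apply_of_ne hne, hij]
      norm_num
    · replace hk : d k = 1 := hk
      rw [sum_norm_inDegreeLaplacian_add_diagonal_apply (ha' k),
        norm_inDegreeLaplacian_add_diagonal_apply_self (ha' k) (ha0 k) (hd' k), hk]
      linarith
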